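/- arXiv:1407.2219 — 4 statements merged into one kernel-verified Lean document; each statement's English description precedes it below -/
import Mathlib

section
/- Let f : [0,1] → ℝ be continuously differentiable with f' Hölder continuous of exponent β−1 with constant L₀, where β ∈ (1,2]. Fix k ∈ ℕ and mid-bin points c_j = (j−1/2)/k. For j = 1,…,k−1 and x ∈ [c_j, c_{j+1}], letting w_j = ∫_{(j−1)/k}^{j/k} f dλ and p(x) = k(c_{j+1}−x)·k w_j + k(x−c_j)·k w_{j+1} (the linear interpolation of the scaled bin masses), one has |f(x) − p(x)| ≤ (3L₀/8) k^{−β}. -/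
/-!
Write `a = c_j`, `h = 1/k`, so that `[a, a + h]` is the segment between the two midpoints and
`M = L₀ h^(β-1)` bounds the oscillation of `f'` on any interval of length `h`. Then `f x - p x`
splits into the linear interpolation error of `f` between `a` and `a + h`, which the mean value
theorem bounds by `M (x - a)(a + h - x) / h ≤ M h / 4`, plus the convex combination, with weights
`k (a + h - x)` and `k (x - a)`, of the midpoint-rule errors `k w_j - f (c_j)` on the two bins.
Pairing `c + d` with `c - d` writes such an error as
`k ∫_0^{h/2} (f (c + d) + f (c - d) - 2 f c)`, and by the mean value theorem the integrand is
at most `M d`, giving `M h / 8`.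
-/

open MeasureTheory intervalIntegral Set

section OscillationBounds

variable {f f' : ℝ → ℝ} {M : ℝ}

theorem exists_mem_Icc_sub_eq_mul_sub {a b : ℝ} (hab : a ≤ b)
    (hf : ∀ t ∈ Icc a b, HasDerivAt f (f' t) t) :
    ∃ ξ ∈ Icc a b, f b - f a = f' ξ * (b - a) := by
  rcases hab.eq_or_lt with rfl | hlt
  · exact ⟨a, left_mem_Icc.2 le_rfl, by ring⟩
  obtain ⟨ξ, hξ, hslope⟩ := exists_hasDerivAt_eq_slope f f' hlt
    (fun t ht => (hf t ht).continuousAt.continuousWithinAt)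
    (fun t ht => hf t (Ioo_subset_Icc_self ht))
  refine ⟨ξ, Ioo_subset_Icc_self hξ, ?_⟩
  rw [hslope, div_mul_cancel₀ _ (sub_ne_zero.2 hlt.ne')]

theorem abs_linear_interpolation_error_le {a b x : ℝ}
    (hf : ∀ t ∈ Icc a b, HasDerivAt f (f' t) t)
    (hM : ∀ u ∈ Icc a b, ∀ v ∈ Icc a b, |f' u - f' v| ≤ M) (hx : x ∈ Icc a b) :
    |(b - a) * f x - ((b - x) * f a + (x - a) * f b)| ≤ M * ((x - a) * (b - x)) := by
  obtain ⟨ξ, hξ, hleft⟩ := exists_mem_Icc_sub_eq_mul_sub hx.1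
    (fun t ht => hf t (Icc_subset_Icc_right hx.2 ht))
  obtain ⟨η, hη, hright⟩ := exists_mem_Icc_sub_eq_mul_sub hx.2
    (fun t ht => hf t (Icc_subset_Icc_left hx.1 ht))
  have hξ' : ξ ∈ Icc a b := Icc_subset_Icc_right hx.2 hξ
  have hη' : η ∈ Icc a b := Icc_subset_Icc_left hx.1 hη
  have hxa : 0 ≤ (x - a) * (b - x) := mul_nonneg (sub_nonneg.2 hx.1) (sub_nonneg.2 hx.2)
  calc |(b - a) * f x - ((b - x) * f a + (x - a) * f b)|
      = (x - a) * (b - x) * |f' ξ - f' η| := by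
        rw [← abs_of_nonneg hxa, ← abs_mul]
        congr 1
        linear_combination (b - x) * hleft - (x - a) * hright
    _ ≤ M * ((x - a) * (b - x)) := by
        rw [mul_comm M]
        exact mul_le_mul_of_nonneg_left (hM ξ hξ' η hη') hxa

theorem abs_symmetric_second_difference_le {c d : ℝ} (hd : 0 ≤ d)
    (hf : ∀ t ∈ Icc (c - d) (c + d), HasDerivAt f (f' t) t)
    (hM : ∀ u ∈ Icc (c - d) (c + d), ∀ v ∈ Icc (c - d) (c + d), |f' u - f' v| ≤ M) :
    |f (c + d) + f (c - d) - 2 * f c| ≤ M * d := by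
  have hmem : ∀ s ∈ Icc 0 d, c + s ∈ Icc (c - d) (c + d) ∧ c - s ∈ Icc (c - d) (c + d) :=
    fun s hs => ⟨⟨by linarith [hs.1, hs.2], by linarith [hs.2]⟩,
      ⟨by linarith [hs.2], by linarith [hs.1]⟩⟩
  obtain ⟨ξ, hξ, hmv⟩ := exists_mem_Icc_sub_eq_mul_sub (f := fun s => f (c + s) + f (c - s))
    (f' := fun s => f' (c + s) - f' (c - s)) hd fun s hs =>
      (((hf _ (hmem s hs).1).comp_const_add c s).add
        ((hf _ (hmem s hs).2).comp_const_sub c s)).congr_deriv (sub_eq_add_neg _ _).symm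
  simp only [add_zero, sub_zero] at hmv
  rw [show f (c + d) + f (c - d) - 2 * f c = (f' (c + ξ) - f' (c - ξ)) * d by linarith,
    abs_mul, abs_of_nonneg hd]
  exact mul_le_mul_of_nonneg_right (hM _ (hmem ξ hξ).1 _ (hmem ξ hξ).2) hd

theorem abs_integral_sub_midpoint_le {c r : ℝ} (hr : 0 ≤ r)
    (hf : ∀ t ∈ Icc (c - r) (c + r), HasDerivAt f (f' t) t)
    (hM : ∀ u ∈ Icc (c - r) (c + r), ∀ v ∈ Icc (c - r) (c + r), |f' u - f' v| ≤ M) :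
    |(∫ t in (c - r)..(c + r), f t) - 2 * r * f c| ≤ M * r ^ 2 / 2 := by
  have hcont : ContinuousOn f (Icc (c - r) (c + r)) :=
    fun t ht => (hf t ht).continuousAt.continuousWithinAt
  have hplus : IntervalIntegrable (fun d => f (c + d)) volume 0 r :=
    (hcont.comp (by fun_prop) fun d hd => ⟨by linarith [hd.1], by linarith [hd.2]⟩)
      |>.intervalIntegrable_of_Icc hr
  have hminus : IntervalIntegrable (fun d => f (c - d)) volume 0 r :=
    (hcont.comp (by fun_prop) fun d hd => ⟨by linarith [hd.2], by linarith [hd.1]⟩)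
      |>.intervalIntegrable_of_Icc hr
  have hfold : (∫ t in (c - r)..(c + r), f t) - 2 * r * f c
      = ∫ d in 0..r, (f (c + d) + f (c - d) - 2 * f c) := by
    rw [integral_sub (hplus.add hminus) intervalIntegrable_const, integral_add hplus hminus,
      integral_comp_add_left, integral_comp_sub_left, intervalIntegral.integral_const, add_zero,
      sub_zero, ← integral_add_adjacent_intervals (b := c)]
    · simp only [smul_eq_mul, sub_zero]
      ring
    · exact (hcont.mono (Icc_subset_Icc le_rfl (by linarith))).intervalIntegrable_of_Icc
        (by linarith)
    · exact (hcont.mono (Icc_subset_Icc (by linarith) le_rfl)).intervalIntegrable_of_Icc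
        (by linarith)
  rw [hfold, ← Real.norm_eq_abs]
  calc ‖∫ d in 0..r, (f (c + d) + f (c - d) - 2 * f c)‖ ≤ ∫ d in 0..r, M * d := by
        refine norm_integral_le_of_norm_le hr (ae_of_all _ fun d hd => ?_)
          ((continuous_const_mul M).intervalIntegrable _ _)
        have hsub : Icc (c - d) (c + d) ⊆ Icc (c - r) (c + r) :=
          Icc_subset_Icc (by linarith [hd.2]) (by linarith [hd.2])
        exact abs_symmetric_second_difference_le hd.1.le (fun t ht => hf t (hsub ht))
          fun u hu v hv => hM u (hsub hu) v (hsub hv)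
    _ = M * r ^ 2 / 2 := by
        rw [intervalIntegral.integral_const_mul, integral_id]
        ring

theorem abs_sub_weighted_means_le {h s t y y₀ y₁ I₀ I₁ A B : ℝ} (hh : 0 < h)
    (hs : 0 ≤ s) (ht : 0 ≤ t) (hst : s + t = h) (hA : |h * y - (s * y₀ + t * y₁)| ≤ A)
    (hB₀ : |I₀ - h * y₀| ≤ B) (hB₁ : |I₁ - h * y₁| ≤ B) :
    |y - (h⁻¹ * s * (h⁻¹ * I₀) + h⁻¹ * t * (h⁻¹ * I₁))| ≤ (A + B) / h := by
  have hsplit : y - (h⁻¹ * s * (h⁻¹ * I₀) + h⁻¹ * t * (h⁻¹ * I₁))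
      = (h * y - (s * y₀ + t * y₁) - s / h * (I₀ - h * y₀)
          - t / h * (I₁ - h * y₁)) / h := by
    field_simp
    ring
  rw [hsplit, abs_div, abs_of_pos hh]
  gcongr
  calc |h * y - (s * y₀ + t * y₁) - s / h * (I₀ - h * y₀) - t / h * (I₁ - h * y₁)|
      ≤ |h * y - (s * y₀ + t * y₁)| + |s / h * (I₀ - h * y₀)|
          + |t / h * (I₁ - h * y₁)| :=
        (abs_sub _ _).trans (add_le_add (abs_sub _ _) le_rfl)
    _ = |h * y - (s * y₀ + t * y₁)| + s / h * |I₀ - h * y₀|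
          + t / h * |I₁ - h * y₁| := by
        rw [abs_mul, abs_mul, abs_of_nonneg (div_nonneg hs hh.le),
          abs_of_nonneg (div_nonneg ht hh.le)]
    _ ≤ A + s / h * B + t / h * B := by gcongr
    _ = A + B := by
        rw [add_assoc, ← add_mul, ← add_div, hst, div_self hh.ne', one_mul]

theorem abs_sub_polygon_le {a h x : ℝ} (hh : 0 < h) (hx : x ∈ Icc a (a + h))
    (hf : ∀ t ∈ Icc (a - h / 2) (a + 3 * h / 2), HasDerivAt f (f' t) t)
    (hM : ∀ u ∈ Icc (a - h / 2) (a + 3 * h / 2), ∀ v ∈ Icc (a - h / 2) (a + 3 * h / 2),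
      |u - v| ≤ h → |f' u - f' v| ≤ M) :
    |f x - (h⁻¹ * (a + h - x) * (h⁻¹ * ∫ t in (a - h / 2)..(a + h / 2), f t) +
        h⁻¹ * (x - a) * (h⁻¹ * ∫ t in (a + h / 2)..(a + 3 * h / 2), f t))|
      ≤ 3 / 8 * M * h := by
  have hM0 : 0 ≤ M := (abs_nonneg _).trans (hM a ⟨by linarith, by linarith⟩ a
    ⟨by linarith, by linarith⟩ (by simpa using hh.le))
  have hsub : ∀ {p q}, a - h / 2 ≤ p → q ≤ a + 3 * h / 2 →
      Icc p q ⊆ Icc (a - h / 2) (a + 3 * h / 2) := fun hp hq => Icc_subset_Icc hp hq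
  have hosc : ∀ {p q}, a - h / 2 ≤ p → q ≤ a + 3 * h / 2 → q ≤ p + h →
      ∀ u ∈ Icc p q, ∀ v ∈ Icc p q, |f' u - f' v| ≤ M := fun hp hq hpq u hu v hv =>
    hM u (hsub hp hq hu) v (hsub hp hq hv)
      (abs_sub_le_iff.2 ⟨by linarith [hu.2, hv.1], by linarith [hu.1, hv.2]⟩)
  have hinterp := abs_linear_interpolation_error_le
    (fun t ht => hf t (hsub (by linarith) (by linarith) ht))
    (hosc (by linarith) (by linarith) le_rfl) hx
  have hleft := abs_integral_sub_midpoint_le (c := a) (r := h / 2) (by linarith)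
    (fun t ht => hf t (hsub le_rfl (by linarith) ht))
    (hosc le_rfl (by linarith) (by linarith))
  have hright := abs_integral_sub_midpoint_le (c := a + h) (r := h / 2) (by linarith)
    (fun t ht => hf t (hsub (by linarith) (by linarith) ht))
    (hosc (by linarith) (by linarith) (by linarith))
  rw [show a + h - h / 2 = a + h / 2 by ring, show a + h + h / 2 = a + 3 * h / 2 by ring]
    at hright
  rw [show 2 * (h / 2) = h by ring] at hleft hright
  rw [add_sub_cancel_left] at hinterp
  have hquad : (x - a) * (a + h - x) ≤ h ^ 2 / 4 := by nlinarith [sq_nonneg (2 * x - 2 * a - h)]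
  refine (abs_sub_weighted_means_le hh (by linarith [hx.2]) (by linarith [hx.1]) (by ring)
    (hinterp.trans (mul_le_mul_of_nonneg_left hquad hM0)) hleft hright).trans_eq ?_
  field_simp
  ring

end OscillationBounds

theorem polygon_approx_holder_general
    (f f' : ℝ → ℝ) (β L₀ : ℝ) (hβ : 1 < β) (hL₀ : 0 < L₀)
    (hderiv : ∀ x ∈ Set.Icc (0:ℝ) 1, HasDerivAt f (f' x) x)
    (hHolder : ∀ x ∈ Set.Icc (0:ℝ) 1, ∀ y ∈ Set.Icc (0:ℝ) 1,
      |f' x - f' y| ≤ L₀ * |x - y| ^ (β - 1))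
    (k : ℕ) (j : ℕ) (hj1 : 1 ≤ j) (hjk : j ≤ k - 1) :
    ∀ x ∈ Set.Icc (((j:ℝ) - 1/2) / k) (((j:ℝ) + 1/2) / k),
      |f x -
        ((k:ℝ) * (((j:ℝ) + 1/2) / k - x) *
            ((k:ℝ) * ∫ t in (((j:ℝ) - 1) / k)..((j:ℝ) / k), f t) +
         (k:ℝ) * (x - ((j:ℝ) - 1/2) / k) *
            ((k:ℝ) * ∫ t in ((j:ℝ) / k)..(((j:ℝ) + 1) / k), f t))|
        ≤ 3 * L₀ / 8 * (k:ℝ) ^ (-β) := by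
  intro x hx
  have hk : (0 : ℝ) < k := by exact_mod_cast (by omega : 0 < k)
  have hj1' : (1 : ℝ) ≤ j := by exact_mod_cast hj1
  have hjk' : (j : ℝ) + 1 ≤ k := by exact_mod_cast (by omega : j + 1 ≤ k)
  have hh : (0 : ℝ) < (k : ℝ)⁻¹ := inv_pos.2 hk
  set a := ((j : ℝ) - 1 / 2) / k with ha
  have e₁ : ((j : ℝ) + 1 / 2) / k = a + (k : ℝ)⁻¹ := by rw [ha]; field_simp; ring
  have e₂ : ((j : ℝ) - 1) / k = a - (k : ℝ)⁻¹ / 2 := by rw [ha]; field_simp; ring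
  have e₃ : (j : ℝ) / k = a + (k : ℝ)⁻¹ / 2 := by rw [ha]; field_simp; ring
  have e₄ : ((j : ℝ) + 1) / k = a + 3 * (k : ℝ)⁻¹ / 2 := by rw [ha]; field_simp; ring
  have hbins : Icc (a - (k : ℝ)⁻¹ / 2) (a + 3 * (k : ℝ)⁻¹ / 2) ⊆ Icc 0 1 := by
    rw [← e₂, ← e₄]
    exact Icc_subset_Icc (div_nonneg (by linarith) hk.le) ((div_le_one hk).2 hjk')
  have hpoly := abs_sub_polygon_le (M := L₀ * (k : ℝ)⁻¹ ^ (β - 1)) hh (by rwa [← e₁])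
    (fun t ht => hderiv t (hbins ht)) fun u hu v hv huv =>
      (hHolder u (hbins hu) v (hbins hv)).trans (by gcongr)
  rw [inv_inv, ← e₁, ← e₂, ← e₃, ← e₄] at hpoly
  refine hpoly.trans_eq ?_
  have hpow : (k : ℝ)⁻¹ ^ (β - 1) * (k : ℝ)⁻¹ = (k : ℝ) ^ (-β) := by
    rw [Real.rpow_sub_one hh.ne', div_mul_cancel₀ _ hh.ne', Real.inv_rpow hk.le,
      Real.rpow_neg hk.le]
  linear_combination (3 / 8 * L₀) * hpow

/-- polygon approximation of a `C^1` density whose derivative is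
Hölder of exponent `β - 1`, `β ∈ (1,2]`: on `[c_j, c_{j+1}]` the linear
interpolation of the scaled bin masses is within `(3 L₀ / 8) k^{-β}` of `f`. -/
theorem polygon_approx_holder
    (f f' : ℝ → ℝ) (β L₀ : ℝ) (hβ : 1 < β) (hβ2 : β ≤ 2) (hL₀ : 0 < L₀)
    (hderiv : ∀ x ∈ Set.Icc (0:ℝ) 1, HasDerivAt f (f' x) x)
    (hf'cont : ContinuousOn f' (Set.Icc (0:ℝ) 1))
    (hHolder : ∀ x ∈ Set.Icc (0:ℝ) 1, ∀ y ∈ Set.Icc (0:ℝ) 1,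
      |f' x - f' y| ≤ L₀ * |x - y| ^ (β - 1))
    (k : ℕ) (hk : 2 ≤ k) (j : ℕ) (hj1 : 1 ≤ j) (hjk : j ≤ k - 1) :
    ∀ x ∈ Set.Icc (((j:ℝ) - 1/2) / k) (((j:ℝ) + 1/2) / k),
      |f x -
        ((k:ℝ) * (((j:ℝ) + 1/2) / k - x) *
            ((k:ℝ) * ∫ t in (((j:ℝ) - 1) / k)..((j:ℝ) / k), f t) +
         (k:ℝ) * (x - ((j:ℝ) - 1/2) / k) *
            ((k:ℝ) * ∫ t in ((j:ℝ) / k)..(((j:ℝ) + 1) / k), f t))|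
        ≤ 3 * L₀ / 8 * (k:ℝ) ^ (-β) :=
  polygon_approx_holder_general f f' β L₀ hβ hL₀ hderiv hHolder k j hj1 hjk
end

section
/- Let f : ℝ → ℝ be strictly concave on an interval containing points x₁ < x₂, let ℓ be the affine function agreeing with f at x₁ and x₂, and let x̄ = (x₁+x₂)/2. If f is twice continuously differentiable, then ∫_{x₁}^{x₂} |f(x) − ℓ(x)| dx ≥ (1/2)(x₂−x₁)[f(x̄) − (f(x₁)+f(x₂))/2], and this quantity equals (1/16)(x₂−x₁)³[−f''(x₂) + O(x₂−x₁)] as x₂−x₁ → 0. -/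
/-!
On each half of `[a, b]` a concave function lies above its trapezoid: averaging it with its
reflection `x ↦ g (a + b - x)`, which has the same integral, gives a function bounded below by
`(g a + g b) / 2`. Hence `∫ f` exceeds the area under the polygon through `(a, f a)`,
`((a + b) / 2, f ((a + b) / 2))`, `(b, f b)`, and subtracting the area under the chord leaves the
triangle. For the asymptotics, L'Hôpital gives
`f ((a + x) / 2) - (f a + f x) / 2 ~ -f'' a * (x - a) ^ 2 / 8` as `x → a⁺`, and continuity of
`f''` lets `f'' a` be replaced by `f'' x`.
-/

open MeasureTheory intervalIntegral Filter Set Topology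

noncomputable def chord (f : ℝ → ℝ) (a b x : ℝ) : ℝ :=
  f a + (f b - f a) * (x - a) / (b - a)

theorem integral_chord (f : ℝ → ℝ) (a b : ℝ) :
    ∫ x in a..b, chord f a b x = (b - a) * ((f a + f b) / 2) := by
  rcases eq_or_ne a b with rfl | hab
  · simp
  · have hba : b - a ≠ 0 := sub_ne_zero.2 hab.symm
    simp only [chord]
    rw [integral_add intervalIntegrable_const ((by fun_prop : Continuous _).intervalIntegrable _ _),
      intervalIntegral.integral_div, intervalIntegral.integral_const_mul,
      intervalIntegral.integral_sub intervalIntegrable_id intervalIntegrable_const, integral_id,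
      intervalIntegral.integral_const, intervalIntegral.integral_const, smul_eq_mul, smul_eq_mul]
    field_simp
    ring

section Trapezoid

variable {g : ℝ → ℝ} {a b : ℝ}

theorem ConcaveOn.add_le_add_reflect (hg : ConcaveOn ℝ (Icc a b) g) {x : ℝ}
    (hx : x ∈ Icc a b) :
    g a + g b ≤ g x + g (a + b - x) := by
  have hab : a ≤ b := hx.1.trans hx.2
  obtain ⟨s, t, hs, ht, hst, rfl⟩ := Icc_subset_segment (𝕜 := ℝ) hx
  have hreflect : a + b - (s • a + t • b) = t • a + s • b := by
    simp only [smul_eq_mul]; linear_combination (-(a + b)) * hst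
  have h₁ := hg.2 (left_mem_Icc.2 hab) (right_mem_Icc.2 hab) hs ht hst
  have h₂ := hg.2 (left_mem_Icc.2 hab) (right_mem_Icc.2 hab) ht hs (by linarith)
  rw [hreflect]
  simp only [smul_eq_mul] at h₁ h₂ ⊢
  linear_combination h₁ + h₂ - (g a + g b) * hst

theorem ConcaveOn.trapezoid_le_integral (hg : ConcaveOn ℝ (Icc a b) g) (hab : a ≤ b)
    (hint : IntervalIntegrable g volume a b) :
    (b - a) * ((g a + g b) / 2) ≤ ∫ x in a..b, g x := by
  have hint' : IntervalIntegrable (fun x => g (a + b - x)) volume a b := by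
    simpa using (hint.comp_sub_left (a + b)).symm
  have hreflect : ∫ x in a..b, g (a + b - x) = ∫ x in a..b, g x := by
    simp [integral_comp_sub_left]
  have hsum := integral_mono_on hab intervalIntegrable_const (hint.add hint')
    (fun x hx => hg.add_le_add_reflect hx)
  rw [intervalIntegral.integral_const, integral_add hint hint', hreflect, smul_eq_mul] at hsum
  linarith

end Trapezoid

theorem ConcaveOn.triangle_area_le_integral_abs_sub_chord {f : ℝ → ℝ} {a b : ℝ}
    (hf : ConcaveOn ℝ (Icc a b) f) (hab : a ≤ b) (hint : IntervalIntegrable f volume a b) :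
    1 / 2 * (b - a) * (f ((a + b) / 2) - (f a + f b) / 2) ≤
      ∫ x in a..b, |f x - chord f a b x| := by
  set m := (a + b) / 2 with hm
  have ham : a ≤ m := by linarith
  have hmb : m ≤ b := by linarith
  have hchord : IntervalIntegrable (chord f a b) volume a b :=
    (by unfold chord; fun_prop : Continuous (chord f a b)).intervalIntegrable _ _
  have hmem : m ∈ uIcc a b := mem_uIcc_of_le ham hmb
  have hint_am : IntervalIntegrable f volume a m :=
    hint.mono_set (uIcc_subset_uIcc left_mem_uIcc hmem)
  have hint_mb : IntervalIntegrable f volume m b :=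
    hint.mono_set (uIcc_subset_uIcc hmem right_mem_uIcc)
  have hleft := (hf.subset (Icc_subset_Icc le_rfl hmb) (convex_Icc a m)).trapezoid_le_integral
    ham hint_am
  have hright := (hf.subset (Icc_subset_Icc ham le_rfl) (convex_Icc m b)).trapezoid_le_integral
    hmb hint_mb
  calc 1 / 2 * (b - a) * (f m - (f a + f b) / 2)
      ≤ (∫ x in a..m, f x) + (∫ x in m..b, f x) - ∫ x in a..b, chord f a b x := by
        have harea : (m - a) * ((f a + f m) / 2) + (b - m) * ((f m + f b) / 2)
            - (b - a) * ((f a + f b) / 2) = 1 / 2 * (b - a) * (f m - (f a + f b) / 2) := by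
          rw [hm]; ring
        rw [integral_chord]; linarith
    _ = ∫ x in a..b, f x - chord f a b x := by
        rw [integral_add_adjacent_intervals hint_am hint_mb, integral_sub hint hchord]
    _ ≤ ∫ x in a..b, |f x - chord f a b x| :=
        integral_mono_on hab (hint.sub hchord) (hint.sub hchord).abs fun x _ => le_abs_self _

theorem tendsto_midpoint_nhdsGT (a : ℝ) :
    Tendsto (fun x => (a + x) / 2) (𝓝[>] a) (𝓝[>] a) := by
  refine tendsto_nhdsWithin_of_tendsto_nhds_of_eventually_within _ ?_ ?_
  · exact (by fun_prop : Continuous fun x : ℝ => (a + x) / 2).tendsto' a a (by ring)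
      |>.mono_left nhdsWithin_le_nhds
  · filter_upwards [self_mem_nhdsWithin] with x (hx : a < x)
    show a < (a + x) / 2
    linarith

theorem tendsto_midpoint_defect_div_sq {f : ℝ → ℝ} {a : ℝ} (hf : Differentiable ℝ f)
    (hf' : DifferentiableAt ℝ (deriv f) a) :
    Tendsto (fun x => (f ((a + x) / 2) - (f a + f x) / 2) / (x - a) ^ 2) (𝓝[>] a)
      (𝓝 (-deriv (deriv f) a / 8)) := by
  have hslope : Tendsto (slope (deriv f) a) (𝓝[>] a) (𝓝 (deriv (deriv f) a)) :=
    (hasDerivAt_iff_tendsto_slope.1 hf'.hasDerivAt).mono_left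
      (nhdsWithin_mono _ fun x hx => ne_of_gt hx)
  -- The quotient of the derivatives of numerator and denominator, in terms of slopes of `f'`.
  have hquot : Tendsto (fun x => slope (deriv f) a ((a + x) / 2) / 8 - slope (deriv f) a x / 4)
      (𝓝[>] a) (𝓝 (-deriv (deriv f) a / 8)) := by
    rw [show -deriv (deriv f) a / 8 = deriv (deriv f) a / 8 - deriv (deriv f) a / 4 by ring]
    exact ((hslope.comp (tendsto_midpoint_nhdsGT a)).div_const 8).sub (hslope.div_const 4)
  refine HasDerivAt.lhopital_zero_nhdsGT
    (f' := fun x => deriv f ((a + x) / 2) * (1 / 2) - deriv f x / 2) (g' := fun x => 2 * (x - a))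
    (Eventually.of_forall fun x => ?_) (Eventually.of_forall fun x => ?_) ?_ ?_ ?_ ?_
  · have hinner : HasDerivAt (fun y : ℝ => (a + y) / 2) (1 / 2) x := by
      simpa using ((hasDerivAt_id x).const_add a).div_const 2
    exact ((hf _).hasDerivAt.comp x hinner).sub (((hf x).hasDerivAt.const_add (f a)).div_const 2)
  · simpa using ((hasDerivAt_id x).sub_const a).fun_pow 2
  · filter_upwards [self_mem_nhdsWithin] with x (hx : a < x)
    have : 0 < x - a := sub_pos.2 hx
    positivity
  · have hcont : Continuous fun x => f ((a + x) / 2) - (f a + f x) / 2 := by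
      have := hf.continuous
      fun_prop
    exact (hcont.tendsto' a 0 (by rw [add_self_div_two]; ring)).mono_left nhdsWithin_le_nhds
  · exact ((by fun_prop : Continuous fun x : ℝ => (x - a) ^ 2).tendsto' a 0 (by simp)).mono_left
      nhdsWithin_le_nhds
  · refine hquot.congr' ?_
    filter_upwards [self_mem_nhdsWithin] with x (hx : a < x)
    have : x - a ≠ 0 := sub_ne_zero.2 hx.ne'
    rw [slope_def_field, slope_def_field, show (a + x) / 2 - a = (x - a) / 2 by ring]
    field_simp
    ring

/-- for a strictly concave, twice continuously differentiable `f`, the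
`L¹`-distance between `f` and its chord on `[x₁,x₂]` is at least the area of the
triangle with vertices `(x₁,f x₁)`, `(x̄, f x̄)`, `(x₂, f x₂)`, and this area equals
`(1/16)(x₂-x₁)³ [-f''(x₂) + O(x₂-x₁)]` as `x₂ ↓ x₁`. -/
theorem chord_triangle_area
    (f : ℝ → ℝ) (u v x₁ : ℝ) (hf : ContDiff ℝ 2 f)
    (hconc : StrictConcaveOn ℝ (Set.Icc u v) f)
    (hx₁ : x₁ ∈ Set.Ico u v) :
    (∀ x₂ ∈ Set.Ioc x₁ v,
      (∫ x in x₁..x₂,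
          |f x - (f x₁ + (f x₂ - f x₁) * (x - x₁) / (x₂ - x₁))|)
        ≥ (1/2) * (x₂ - x₁) * (f ((x₁ + x₂) / 2) - (f x₁ + f x₂) / 2))
    ∧ ∃ r : ℝ → ℝ,
        Tendsto r (nhdsWithin x₁ (Set.Ioi x₁)) (nhds 0) ∧
        ∀ x₂ ∈ Set.Ioc x₁ v,
          (1/2) * (x₂ - x₁) * (f ((x₁ + x₂) / 2) - (f x₁ + f x₂) / 2)
            = (1/16) * (x₂ - x₁) ^ 3 * (-(deriv (deriv f) x₂) + r x₂) := by
  refine ⟨fun x₂ hx₂ => ?_, ?_⟩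
  · have hconc' : ConcaveOn ℝ (Icc x₁ x₂) f :=
      hconc.concaveOn.subset (Icc_subset_Icc hx₁.1 hx₂.2) (convex_Icc _ _)
    exact hconc'.triangle_area_le_integral_abs_sub_chord hx₂.1.le
      (hf.continuous.intervalIntegrable _ _)
  · obtain ⟨hdiff, -, hf'⟩ := contDiff_succ_iff_deriv.1 (show ContDiff ℝ (1 + 1) f from hf)
    -- `r` is forced by the identity; it tends to `8 * (-f'' x₁ / 8) + f'' x₁ = 0`.
    refine ⟨fun x => 8 * ((f ((x₁ + x) / 2) - (f x₁ + f x) / 2) / (x - x₁) ^ 2)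
      + deriv (deriv f) x, ?_, fun x₂ hx₂ => ?_⟩
    · have hlim := ((tendsto_midpoint_defect_div_sq hdiff
          (hf'.differentiable one_ne_zero x₁)).const_mul 8).add
        (((hf'.continuous_deriv le_rfl).tendsto x₁).mono_left nhdsWithin_le_nhds)
      convert hlim using 2
      ring
    · have : x₂ - x₁ ≠ 0 := sub_ne_zero.2 hx₂.1.ne'
      field_simp
      ring
end

section
/- Let f : [0,1] → ℝ be continuously differentiable with f' Lipschitz with constant L₀ (equivalently, f twice differentiable with |f''| ≤ L₀). Then the k-regular polygon p based on f (linear interpolation at midpoints c_j = (j−1/2)/k of the values k w_j with w_j the bin masses of f) satisfies sup_{x ∈ [c_1, c_k]} |f(x) − p(x)| ≤ (3L₀/8) k^{−2}. -/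
/-!
Around a point `x` write `f t = f x + f' x (t - x) + r(t)` with `|r t| ≤ L₀ (t - x)²`.
Averaging an affine function over a bin gives its value at the bin's midpoint, and the polygon
interpolates linearly between these midpoints, so it reproduces the affine part at `x` exactly.
What is left is a convex combination of `k ∫ r` over the two bins, and with `x = c_j + s / k`
these contribute at most `L₀ (1/4 + 3 s (1 - s)) / (3 k²) ≤ L₀ / (3 k²)`.
-/

open MeasureTheory intervalIntegral Set

lemma integral_affine (α β x u v : ℝ) :
    ∫ t in u..v, (α + β * (t - x)) = (v - u) * (α + β * ((u + v) / 2 - x)) := by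
  rw [intervalIntegral.integral_add intervalIntegrable_const
      ((by fun_prop : Continuous fun t ↦ β * (t - x)).intervalIntegrable _ _),
    intervalIntegral.integral_const, intervalIntegral.integral_const_mul,
    integral_comp_sub_right (fun t ↦ t), integral_id, smul_eq_mul]
  ring

lemma integral_sub_sq (x u v : ℝ) :
    ∫ t in u..v, (t - x) ^ 2 = ((v - x) ^ 3 - (u - x) ^ 3) / 3 := by
  rw [integral_comp_sub_right (fun t ↦ t ^ 2), integral_pow]
  ring

lemma integral_eq_integral_affine_add {f : ℝ → ℝ} {u v : ℝ}
    (hf : IntervalIntegrable f volume u v) (α β x : ℝ) :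
    ∫ t in u..v, f t =
      (v - u) * (α + β * ((u + v) / 2 - x)) + ∫ t in u..v, (f t - (α + β * (t - x))) := by
  rw [intervalIntegral.integral_sub hf
      ((by fun_prop : Continuous fun t ↦ α + β * (t - x)).intervalIntegrable _ _),
    integral_affine]
  ring

section LipschitzDeriv

variable {f f' : ℝ → ℝ} {L a b : ℝ}

lemma continuousOn_of_abs_sub_le_mul {g : ℝ → ℝ} {s : Set ℝ}
    (h : ∀ x ∈ s, ∀ y ∈ s, |g x - g y| ≤ L * |x - y|) : ContinuousOn g s :=
  (LipschitzOnWith.of_dist_le' (by simpa only [Real.dist_eq] using h)).continuousOn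

lemma abs_sub_sub_mul_le_of_lipschitz_deriv (hL : 0 ≤ L)
    (hderiv : ∀ x ∈ Icc a b, HasDerivAt f (f' x) x)
    (hLip : ∀ x ∈ Icc a b, ∀ y ∈ Icc a b, |f' x - f' y| ≤ L * |x - y|)
    {x y : ℝ} (hx : x ∈ Icc a b) (hy : y ∈ Icc a b) :
    |f y - f x - f' x * (y - x)| ≤ L * (y - x) ^ 2 := by
  have hsub : uIcc x y ⊆ Icc a b := uIcc_subset_Icc hx hy
  have hint : IntervalIntegrable f' volume x y :=
    ((continuousOn_of_abs_sub_le_mul hLip).mono hsub).intervalIntegrable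
  have hrem : f y - f x - f' x * (y - x) = ∫ t in x..y, (f' t - f' x) := by
    rw [intervalIntegral.integral_sub hint intervalIntegrable_const,
      integral_eq_sub_of_hasDerivAt (fun t ht ↦ hderiv t (hsub ht)) hint,
      intervalIntegral.integral_const, smul_eq_mul]
    ring
  have hbound : ∀ t ∈ uIoc x y, ‖f' t - f' x‖ ≤ L * |y - x| := fun t ht ↦ by
    have ht' := uIoc_subset_uIcc ht
    calc ‖f' t - f' x‖ ≤ L * |t - x| := hLip t (hsub ht') x hx
      _ ≤ L * |y - x| := mul_le_mul_of_nonneg_left (abs_sub_left_of_mem_uIcc ht') hL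
  calc |f y - f x - f' x * (y - x)| ≤ L * |y - x| * |y - x| := by
        simpa only [hrem, Real.norm_eq_abs] using norm_integral_le_of_norm_le_const hbound
    _ = L * (y - x) ^ 2 := by rw [mul_assoc, ← abs_mul, ← sq, abs_sq]

lemma abs_integral_sub_affine_le (hL : 0 ≤ L)
    (hderiv : ∀ x ∈ Icc a b, HasDerivAt f (f' x) x)
    (hLip : ∀ x ∈ Icc a b, ∀ y ∈ Icc a b, |f' x - f' y| ≤ L * |x - y|)
    {x u v : ℝ} (hx : x ∈ Icc a b) (hau : a ≤ u) (huv : u ≤ v) (hvb : v ≤ b) :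
    |∫ t in u..v, (f t - (f x + f' x * (t - x)))| ≤ L * ((v - x) ^ 3 - (u - x) ^ 3) / 3 := by
  have hf : ContinuousOn f (Icc u v) := fun t ht ↦
    (hderiv t ⟨hau.trans ht.1, ht.2.trans hvb⟩).continuousAt.continuousWithinAt
  calc |∫ t in u..v, (f t - (f x + f' x * (t - x)))|
      ≤ ∫ t in u..v, |f t - (f x + f' x * (t - x))| := abs_integral_le_integral_abs huv
    _ ≤ ∫ t in u..v, L * (t - x) ^ 2 := by
        refine integral_mono_on huv ((hf.sub (by fun_prop)).abs.intervalIntegrable_of_Icc huv)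
          ((by fun_prop : Continuous fun t ↦ L * (t - x) ^ 2).intervalIntegrable _ _)
          fun t ht ↦ ?_
        rw [← sub_sub]
        exact abs_sub_sub_mul_le_of_lipschitz_deriv hL hderiv hLip hx
          ⟨hau.trans ht.1, ht.2.trans hvb⟩
    _ = L * ((v - x) ^ 3 - (u - x) ^ 3) / 3 := by
        rw [intervalIntegral.integral_const_mul, integral_sub_sq]; ring

end LipschitzDeriv

theorem abs_sub_polygon_le_s7 {f f' : ℝ → ℝ} {L k j : ℝ} (hL : 0 ≤ L) (hk : 0 < k)
    (hderiv : ∀ x ∈ Icc ((j - 1) / k) ((j + 1) / k), HasDerivAt f (f' x) x)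
    (hLip : ∀ x ∈ Icc ((j - 1) / k) ((j + 1) / k), ∀ y ∈ Icc ((j - 1) / k) ((j + 1) / k),
      |f' x - f' y| ≤ L * |x - y|)
    {x : ℝ} (hx : x ∈ Icc ((j - 1/2) / k) ((j + 1/2) / k)) :
    |f x - (k * ((j + 1/2) / k - x) * (k * ∫ t in ((j - 1) / k)..(j / k), f t) +
        k * (x - (j - 1/2) / k) * (k * ∫ t in (j / k)..((j + 1) / k), f t))|
      ≤ L / 3 * (k ^ 2)⁻¹ := by
  obtain ⟨s, hxs⟩ : ∃ s, x = (j - 1/2 + s) / k := ⟨k * x - (j - 1/2), by field_simp; ring⟩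
  rw [hxs] at hx
  have hs0 : 0 ≤ s := by linarith [(div_le_div_iff_of_pos_right hk).1 hx.1]
  have hs1 : s ≤ 1 := by linarith [(div_le_div_iff_of_pos_right hk).1 hx.2]
  have ham : (j - 1) / k ≤ j / k := by gcongr; linarith
  have hmb : j / k ≤ (j + 1) / k := by gcongr; linarith
  have hxI : x ∈ Icc ((j - 1) / k) ((j + 1) / k) := by
    rw [hxs]; exact ⟨by gcongr; linarith, by gcongr; linarith⟩
  have hf : ContinuousOn f (Icc ((j - 1) / k) ((j + 1) / k)) := fun t ht ↦
    (hderiv t ht).continuousAt.continuousWithinAt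
  rw [integral_eq_integral_affine_add
      ((hf.mono (Icc_subset_Icc_right hmb)).intervalIntegrable_of_Icc ham) (f x) (f' x) x,
    integral_eq_integral_affine_add
      ((hf.mono (Icc_subset_Icc_left ham)).intervalIntegrable_of_Icc hmb) (f x) (f' x) x]
  have hR₁ := abs_integral_sub_affine_le hL hderiv hLip hxI le_rfl ham hmb
  have hR₂ := abs_integral_sub_affine_le hL hderiv hLip hxI ham hmb le_rfl
  generalize ∫ t in (j - 1) / k..j / k, (f t - (f x + f' x * (t - x))) = R₁ at hR₁ ⊢
  generalize ∫ t in j / k..(j + 1) / k, (f t - (f x + f' x * (t - x))) = R₂ at hR₂ ⊢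
  subst hxs
  have hw₁ : 0 ≤ (1 - s) * k := mul_nonneg (sub_nonneg.2 hs1) hk.le
  have hw₂ : 0 ≤ s * k := mul_nonneg hs0 hk.le
  calc _ = |(1 - s) * k * R₁ + s * k * R₂| := by
        rw [← abs_neg]; congr 1; field_simp; ring
    _ ≤ |(1 - s) * k * R₁| + |s * k * R₂| := abs_add_le _ _
    _ = (1 - s) * k * |R₁| + s * k * |R₂| := by
        rw [abs_mul ((1 - s) * k), abs_mul (s * k), abs_of_nonneg hw₁, abs_of_nonneg hw₂]
    _ ≤ L / 3 * (k ^ 2)⁻¹ * (1 / 4 + 3 * s * (1 - s)) := by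
        refine (add_le_add (mul_le_mul_of_nonneg_left hR₁ hw₁)
          (mul_le_mul_of_nonneg_left hR₂ hw₂)).trans_eq ?_
        field_simp
        ring
    _ ≤ L / 3 * (k ^ 2)⁻¹ :=
        mul_le_of_le_one_right (by positivity) (by nlinarith [sq_nonneg (2 * s - 1)])

theorem polygon_approx_lipschitz_deriv_general
    (f f' : ℝ → ℝ) (L₀ : ℝ)
    (hderiv : ∀ x ∈ Set.Icc (0:ℝ) 1, HasDerivAt f (f' x) x)
    (hLip : ∀ x ∈ Set.Icc (0:ℝ) 1, ∀ y ∈ Set.Icc (0:ℝ) 1,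
      |f' x - f' y| ≤ L₀ * |x - y|)
    (k : ℕ) (j : ℕ) (hj1 : 1 ≤ j) (hjk : j ≤ k - 1) :
    ∀ x ∈ Set.Icc (((j:ℝ) - 1/2) / k) (((j:ℝ) + 1/2) / k),
      |f x -
        ((k:ℝ) * (((j:ℝ) + 1/2) / k - x) *
            ((k:ℝ) * ∫ t in (((j:ℝ) - 1) / k)..((j:ℝ) / k), f t) +
         (k:ℝ) * (x - ((j:ℝ) - 1/2) / k) *
            ((k:ℝ) * ∫ t in ((j:ℝ) / k)..(((j:ℝ) + 1) / k), f t))|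
        ≤ 3 * L₀ / 8 * ((k:ℝ) ^ 2)⁻¹ := by
  intro x hx
  have hk : (0:ℝ) < k := by exact_mod_cast (by omega : 0 < k)
  have hL₀ : 0 ≤ L₀ := by
    simpa using (abs_nonneg _).trans (hLip 0 ⟨le_rfl, zero_le_one⟩ 1 ⟨zero_le_one, le_rfl⟩)
  have hbins : Icc (((j:ℝ) - 1) / k) (((j:ℝ) + 1) / k) ⊆ Icc 0 1 := by
    have hj : (1:ℝ) ≤ j := by exact_mod_cast hj1
    have hjk' : (j:ℝ) + 1 ≤ k := by exact_mod_cast (by omega : j + 1 ≤ k)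
    exact Icc_subset_Icc (div_nonneg (by linarith) hk.le) ((div_le_one hk).2 hjk')
  calc _ ≤ L₀ / 3 * ((k:ℝ) ^ 2)⁻¹ :=
        abs_sub_polygon_le_s7 hL₀ hk (fun y hy ↦ hderiv y (hbins hy))
          (fun y hy z hz ↦ hLip y (hbins hy) z (hbins hz)) hx
    _ ≤ 3 * L₀ / 8 * ((k:ℝ) ^ 2)⁻¹ :=
        mul_le_mul_of_nonneg_right (by linarith) (by positivity)

/-- the `β = 2` polygon bound: if `f` is `C¹` with `f'` Lipschitz of
constant `L₀` on `[0,1]`, the `k`-regular polygon based on `f` satisfies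
`|f x - p x| ≤ (3 L₀ / 8) k^{-2}` on `[c₁, c_k]` (stated on each `[c_j, c_{j+1}]`). -/
theorem polygon_approx_lipschitz_deriv
    (f f' : ℝ → ℝ) (L₀ : ℝ) (hL₀ : 0 < L₀)
    (hderiv : ∀ x ∈ Set.Icc (0:ℝ) 1, HasDerivAt f (f' x) x)
    (hf'cont : ContinuousOn f' (Set.Icc (0:ℝ) 1))
    (hLip : ∀ x ∈ Set.Icc (0:ℝ) 1, ∀ y ∈ Set.Icc (0:ℝ) 1,
      |f' x - f' y| ≤ L₀ * |x - y|)
    (k : ℕ) (hk : 2 ≤ k) (j : ℕ) (hj1 : 1 ≤ j) (hjk : j ≤ k - 1) :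
    ∀ x ∈ Set.Icc (((j:ℝ) - 1/2) / k) (((j:ℝ) + 1/2) / k),
      |f x -
        ((k:ℝ) * (((j:ℝ) + 1/2) / k - x) *
            ((k:ℝ) * ∫ t in (((j:ℝ) - 1) / k)..((j:ℝ) / k), f t) +
         (k:ℝ) * (x - ((j:ℝ) - 1/2) / k) *
            ((k:ℝ) * ∫ t in ((j:ℝ) / k)..(((j:ℝ) + 1) / k), f t))|
        ≤ 3 * L₀ / 8 * ((k:ℝ) ^ 2)⁻¹ :=
  polygon_approx_lipschitz_deriv_general f f' L₀ hderiv hLip k j hj1 hjk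
end

section
/- Let f be a continuous density on [0,1] with bounded derivative on (0,1) (hence uniformly continuous). Let h_k and p_k be respectively the k-regular histogram and the k-regular polygon based on f (with bin masses w_j = ∫_{A_{j,k}} f dλ and midpoints c_j = (j−1/2)/k). Then for every x ∈ (0,1), |h_k(x) − p_k(x)| → 0 as k → ∞. Specifically, |h_k(x) − p_k(x)| ≤ k·max_{1≤j≤k−1} ∫_0^{1/k} |f(j/k + t) − f(j/k − t)| dt, which tends to 0 by uniform continuity. -/
/-!
Where `c_m ≤ x ≤ c_{m+1}`, the polygon is a convex combination of `k w_m` and `k w_{m+1}` and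
the histogram equals one of them, so `|h_k(x) - p_k(x)| ≤ k |w_m - w_{m+1}|`. Reflecting the
bin `[(m-1)/k, m/k]` about `m/k` gives `w_m - w_{m+1} = ∫₀^{1/k} (f(m/k - t) - f(m/k + t)) dt`;
by uniform continuity of `f` on `[0,1]` the integrand is at most `ε` once `2/k` is below the
modulus of `ε`, so `k |w_m - w_{m+1}| ≤ ε`.
-/

open MeasureTheory intervalIntegral Filter

/-- Mass of `f` on the `j`-th bin of the uniform `k`-partition of `[0,1]`. -/
noncomputable def binMass (f : ℝ → ℝ) (k j : ℕ) : ℝ :=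
  ∫ t in (((j:ℝ) - 1) / k)..((j:ℝ) / k), f t

/-- Index of the bin of the uniform `k`-partition containing `x` (bins
`A_1 = [0,1/k]`, `A_j = ((j-1)/k, j/k]`). -/
noncomputable def binIdx (k : ℕ) (x : ℝ) : ℕ := max 1 (Nat.ceil ((k:ℝ) * x))

/-- The `k`-regular histogram with weights `w`. -/
noncomputable def histoVal (k : ℕ) (w : ℕ → ℝ) (x : ℝ) : ℝ := (k:ℝ) * w (binIdx k x)

/-- The `k`-regular polygon with weights `w`: linear interpolation of the values
`k w_j` at the mid-bin points `c_j = (j-1/2)/k`, constant on `[0,c_1]` and `[c_k,1]`. -/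
noncomputable def polyVal (k : ℕ) (w : ℕ → ℝ) (x : ℝ) : ℝ :=
  if x ≤ (1/2) / (k:ℝ) then (k:ℝ) * w 1
  else if ((k:ℝ) - 1/2) / (k:ℝ) ≤ x then (k:ℝ) * w k
  else
    (k:ℝ) * (((min (k-1) (max 1 (Nat.floor ((k:ℝ) * x + 1/2))) : ℕ) + 1/2) / k - x)
        * ((k:ℝ) * w (min (k-1) (max 1 (Nat.floor ((k:ℝ) * x + 1/2)))))
    + (k:ℝ) * (x - (((min (k-1) (max 1 (Nat.floor ((k:ℝ) * x + 1/2))) : ℕ) - 1/2) / k))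
        * ((k:ℝ) * w (min (k-1) (max 1 (Nat.floor ((k:ℝ) * x + 1/2))) + 1))

open Set

section Interpolation

variable {k : ℕ} {x : ℝ}

/-- For `c_1 ≤ x ≤ c_k`, the index `m ∈ [1, k-1]` with `c_m ≤ x ≤ c_{m+1}`, where
`c_m = (m - 1/2)/k`: the piece of `polyVal` containing `x`. -/
noncomputable def polyIdx (k : ℕ) (x : ℝ) : ℕ := min (k - 1) (max 1 ⌊(k:ℝ) * x + 1/2⌋₊)

lemma mem_Icc_div_iff {a b c : ℝ} (hc : 0 < c) :
    x ∈ Icc (a / c) (b / c) ↔ c * x ∈ Icc a b := by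
  simp only [mem_Icc, div_le_iff₀ hc, le_div_iff₀ hc, mul_comm x]

lemma one_le_polyIdx (hk : 2 ≤ k) : 1 ≤ polyIdx k x := by
  unfold polyIdx; omega

lemma polyIdx_le_sub_one : polyIdx k x ≤ k - 1 := min_le_left _ _

lemma abs_mul_sub_polyIdx_le (hk : 2 ≤ k) (hx : (k:ℝ) * x ∈ Icc (1/2 : ℝ) (k - 1/2)) :
    |(k:ℝ) * x - polyIdx k x| ≤ 1/2 := by
  set n := ⌊(k:ℝ) * x + 1/2⌋₊
  have hn_le : (n:ℝ) ≤ k * x + 1/2 := Nat.floor_le (by linarith [hx.1])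
  have hn_lt : k * x + 1/2 < n + 1 := Nat.lt_floor_add_one _
  have hn_pos : 1 ≤ n := Nat.le_floor (by push_cast; linarith [hx.1])
  have hnk : n ≤ k := Nat.floor_le_of_le (by linarith [hx.2])
  rw [abs_le]
  rcases (by unfold polyIdx; omega : polyIdx k x = n ∨ (n = k ∧ polyIdx k x = k - 1))
    with h | ⟨hn, h⟩
  · rw [h]; constructor <;> linarith
  · have hn' : (n:ℝ) = k := by exact_mod_cast hn
    rw [h, Nat.cast_sub (by omega)]; push_cast
    constructor <;> linarith [hx.2]

lemma binIdx_eq_polyIdx_or (hk : 2 ≤ k) (hx : (k:ℝ) * x ∈ Icc (1/2 : ℝ) (k - 1/2)) :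
    binIdx k x = polyIdx k x ∨ binIdx k x = polyIdx k x + 1 := by
  have hm := abs_le.1 (abs_mul_sub_polyIdx_le hk hx)
  have hm1 := one_le_polyIdx (x := x) hk
  have hge : polyIdx k x - 1 < ⌈(k:ℝ) * x⌉₊ :=
    Nat.lt_ceil.2 (by rw [Nat.cast_sub hm1]; push_cast; linarith)
  have hle : ⌈(k:ℝ) * x⌉₊ ≤ polyIdx k x + 1 := Nat.ceil_le.2 (by push_cast; linarith)
  unfold binIdx; omega

lemma polyVal_eq (w : ℕ → ℝ) (hk : 2 ≤ k) (hx : x ∈ Icc ((1/2 : ℝ) / k) ((k - 1/2) / k)) :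
    polyVal k w x = k * w (polyIdx k x)
      + ((k:ℝ) * x - polyIdx k x + 1/2) * (k * w (polyIdx k x + 1) - k * w (polyIdx k x)) := by
  have hk₀ : (0:ℝ) < k := Nat.cast_pos.2 (by omega)
  have hy := (mem_Icc_div_iff hk₀).1 hx
  have hm := abs_le.1 (abs_mul_sub_polyIdx_le hk hy)
  have hm1 := one_le_polyIdx (x := x) hk
  have hmk := polyIdx_le_sub_one (k := k) (x := x)
  rw [polyVal, show min (k - 1) (max 1 ⌊(k:ℝ) * x + 1/2⌋₊) = polyIdx k x from rfl]
  generalize polyIdx k x = m at *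
  split_ifs with h₁ h₂
  · have hy₁ : (k:ℝ) * x = 1/2 :=
      le_antisymm ((mem_Icc_div_iff hk₀).1 ⟨hx.1, h₁⟩).2 hy.1
    obtain rfl : m = 1 := le_antisymm (by exact_mod_cast (by linarith : (m:ℝ) ≤ 1)) hm1
    rw [hy₁]; ring
  · have hy₂ : (k:ℝ) * x = k - 1/2 :=
      le_antisymm hy.2 ((mem_Icc_div_iff hk₀).1 ⟨h₂, hx.2⟩).1
    obtain rfl : m = k - 1 := le_antisymm hmk <| by
      rw [← Nat.cast_le (α := ℝ), Nat.cast_sub (by omega)]; push_cast; linarith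
    rw [Nat.sub_add_cancel (by omega), hy₂, Nat.cast_sub (by omega)]; push_cast; ring
  · field_simp; ring

lemma abs_sub_add_mul_sub_le {a u v s : ℝ} (ha : a = u ∨ a = v) (hs : s ∈ Icc 0 1) :
    |a - (u + s * (v - u))| ≤ |u - v| := by
  rcases ha with rfl | rfl
  · rw [show a - (a + s * (v - a)) = s * (a - v) by ring, abs_mul, abs_of_nonneg hs.1]
    exact mul_le_of_le_one_left (abs_nonneg _) hs.2
  · rw [show a - (u + s * (a - u)) = (1 - s) * (a - u) by ring, abs_mul,
      abs_of_nonneg (by linarith [hs.2]), abs_sub_comm u]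
    exact mul_le_of_le_one_left (abs_nonneg _) (by linarith [hs.1])

theorem abs_histoVal_sub_polyVal_le (w : ℕ → ℝ) (hk : 2 ≤ k)
    (hx : x ∈ Icc ((1/2 : ℝ) / k) ((k - 1/2) / k)) :
    |histoVal k w x - polyVal k w x| ≤ k * |w (polyIdx k x) - w (polyIdx k x + 1)| := by
  have hy := (mem_Icc_div_iff (Nat.cast_pos.2 (by omega))).1 hx
  have hm := abs_le.1 (abs_mul_sub_polyIdx_le hk hy)
  have hh : histoVal k w x = k * w (polyIdx k x) ∨ histoVal k w x = k * w (polyIdx k x + 1) := by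
    rcases binIdx_eq_polyIdx_or hk hy with h | h <;> simp only [histoVal, h, true_or, or_true]
  calc |histoVal k w x - polyVal k w x|
      ≤ |k * w (polyIdx k x) - k * w (polyIdx k x + 1)| := by
        rw [polyVal_eq w hk hx]
        exact abs_sub_add_mul_sub_le hh ⟨by linarith, by linarith⟩
    _ = k * |w (polyIdx k x) - w (polyIdx k x + 1)| := by
        rw [← mul_sub, abs_mul, Nat.abs_cast]

end Interpolation

lemma eventually_mem_Icc_half_div {x : ℝ} (hx : x ∈ Ioo 0 1) :
    ∀ᶠ k : ℕ in atTop, x ∈ Icc ((1/2 : ℝ) / k) ((k - 1/2) / k) := by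
  have h := tendsto_const_div_atTop_nhds_zero_nat (1/2 : ℝ)
  filter_upwards [h.eventually (eventually_le_nhds hx.1),
    h.eventually (eventually_le_nhds (sub_pos.2 hx.2)), eventually_gt_atTop 0]
    with k hk₁ hk₂ hk
  rw [sub_div, div_self (by positivity)]
  exact ⟨hk₁, by linarith⟩

lemma integral_left_sub_integral_right {E : Type*} [NormedAddCommGroup E] [NormedSpace ℝ E]
    {f : ℝ → E} {c r : ℝ} (hl : IntervalIntegrable f volume (c - r) c)
    (hr : IntervalIntegrable f volume c (c + r)) :
    (∫ x in c - r..c, f x) - ∫ x in c..c + r, f x = ∫ t in 0..r, (f (c - t) - f (c + t)) := by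
  have hl' : IntervalIntegrable (fun t => f (c - t)) volume 0 r := by
    simpa using (hl.comp_sub_left c).symm
  have hr' : IntervalIntegrable (fun t => f (c + t)) volume 0 r := by
    simpa using hr.comp_add_left c
  rw [integral_sub hl' hr', integral_comp_sub_left, integral_comp_add_left]
  simp

lemma Icc_div_sub_div_add_div_subset {k j : ℕ} (hj : 1 ≤ j) (hjk : j + 1 ≤ k) :
    Icc ((j : ℝ) / k - 1 / k) (j / k + 1 / k) ⊆ Icc 0 1 := by
  have hk : (0 : ℝ) < k := by exact_mod_cast (by omega : 0 < k)
  have hj' : (1 : ℝ) ≤ j := by exact_mod_cast hj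
  have hjk' : (j : ℝ) + 1 ≤ k := by exact_mod_cast hjk
  refine Icc_subset_Icc ?_ ?_
  · rw [div_sub_div_same]; exact div_nonneg (by linarith) hk.le
  · rw [← add_div, div_le_one hk]; exact hjk'

lemma abs_binMass_sub_binMass_succ_le {f : ℝ → ℝ} (hf : ContinuousOn f (Icc 0 1)) {k j : ℕ}
    (hj : 1 ≤ j) (hjk : j + 1 ≤ k) :
    |binMass f k j - binMass f k (j + 1)|
      ≤ ∫ t in (0 : ℝ)..(1 / k), |f (j / k + t) - f (j / k - t)| := by
  set c : ℝ := j / k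
  have hsub := Icc_div_sub_div_add_div_subset hj hjk
  have hint : ∀ a ∈ Icc (c - 1 / k) (c + 1 / k), ∀ b ∈ Icc (c - 1 / k) (c + 1 / k),
      IntervalIntegrable f volume a b := fun a ha b hb =>
    (hf.mono ((uIcc_subset_Icc ha hb).trans hsub)).intervalIntegrable
  have hc : c ∈ Icc (c - 1 / k) (c + 1 / k) := ⟨by simp, by simp⟩
  have hr : (0 : ℝ) ≤ 1 / k := by positivity
  have hleft : binMass f k j = ∫ x in c - 1 / k..c, f x := by rw [binMass, sub_div]
  have hright : binMass f k (j + 1) = ∫ x in c..c + 1 / k, f x := by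
    rw [binMass]; push_cast; rw [add_sub_cancel_right, add_div]
  rw [hleft, hright, integral_left_sub_integral_right (hint _ (left_mem_Icc.2 (by linarith)) _ hc)
    (hint _ hc _ (right_mem_Icc.2 (by linarith)))]
  simp_rw [abs_sub_comm (f (c + _))]
  exact abs_integral_le_integral_abs hr

lemma exists_abs_histoVal_sub_polyVal_le {f : ℝ → ℝ} (hf : ContinuousOn f (Icc 0 1)) {k : ℕ}
    (hk : 2 ≤ k) {x : ℝ} (hx : x ∈ Icc ((1/2 : ℝ) / k) ((k - 1/2) / k)) :
    ∃ j ∈ Finset.Icc 1 (k - 1), |histoVal k (binMass f k) x - polyVal k (binMass f k) x|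
      ≤ k * ∫ t in (0 : ℝ)..(1 / k), |f (j / k + t) - f (j / k - t)| := by
  have hm := one_le_polyIdx (x := x) hk
  have hmk := polyIdx_le_sub_one (k := k) (x := x)
  refine ⟨polyIdx k x, Finset.mem_Icc.2 ⟨hm, hmk⟩, ?_⟩
  calc _ ≤ _ := abs_histoVal_sub_polyVal_le _ hk hx
    _ ≤ _ := by gcongr; exact abs_binMass_sub_binMass_succ_le hf hm (by omega)

lemma eventually_mul_integral_abs_sub_le {f : ℝ → ℝ} (hf : UniformContinuousOn f (Icc 0 1))
    {ε : ℝ} (hε : 0 < ε) :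
    ∀ᶠ k : ℕ in atTop, ∀ j, 1 ≤ j → j + 1 ≤ k →
      (k : ℝ) * ∫ t in (0 : ℝ)..(1 / k), |f (j / k + t) - f (j / k - t)| ≤ ε := by
  obtain ⟨δ, hδ, hfδ⟩ := Metric.uniformContinuousOn_iff_le.1 hf ε hε
  filter_upwards [(tendsto_const_div_atTop_nhds_zero_nat 2).eventually (eventually_le_nhds hδ),
    eventually_gt_atTop 0] with k hkδ hk j hj hjk
  have hk' : (0 : ℝ) < k := by exact_mod_cast hk
  have hr : (0 : ℝ) < 1 / k := by positivity
  have hsub := Icc_div_sub_div_add_div_subset hj hjk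
  have hosc : ∀ t ∈ uIoc (0 : ℝ) (1 / k), ‖|f (j / k + t) - f (j / k - t)|‖ ≤ ε := by
    intro t ht
    rw [uIoc_of_le hr.le] at ht
    rw [norm_abs_eq_norm, ← dist_eq_norm]
    refine hfδ _ (hsub ⟨by linarith [ht.1], by linarith [ht.2]⟩) _
      (hsub ⟨by linarith [ht.2], by linarith [ht.1]⟩) ?_
    rw [Real.dist_eq, abs_of_nonneg (by linarith [ht.1])]
    linarith [ht.2, (by ring : (2 : ℝ) / k = 2 * (1 / k))]
  calc (k : ℝ) * ∫ t in (0 : ℝ)..(1 / k), |f (j / k + t) - f (j / k - t)|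
      ≤ k * (ε * |1 / (k : ℝ) - 0|) :=
        mul_le_mul_of_nonneg_left ((le_abs_self _).trans (norm_integral_le_of_norm_le_const hosc))
          hk'.le
    _ = ε := by rw [sub_zero, abs_of_pos hr]; field_simp

/-- for a continuous density with bounded derivative on `(0,1)`,
the histogram and the polygon based on `f` agree asymptotically at every
`x ∈ (0,1)`; moreover `|h_k(x) - p_k(x)|` is bounded by
`k · max_j ∫₀^{1/k} |f(j/k + t) - f(j/k - t)| dt` on `[c₁, c_k]`. -/
theorem histogram_polygon_pointwise
    (f : ℝ → ℝ)
    (hf_cont : ContinuousOn f (Set.Icc (0:ℝ) 1)) :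
    (∀ x ∈ Set.Ioo (0:ℝ) 1,
      Tendsto (fun k : ℕ => |histoVal k (binMass f k) x - polyVal k (binMass f k) x|)
        atTop (nhds 0))
    ∧ ∀ k : ℕ, ∀ hk : 2 ≤ k,
        ∀ x ∈ Set.Icc ((1/2) / (k:ℝ)) (((k:ℝ) - 1/2) / (k:ℝ)),
          |histoVal k (binMass f k) x - polyVal k (binMass f k) x|
            ≤ (k:ℝ) * (Finset.Icc 1 (k-1)).sup'
                (by simpa using Finset.nonempty_Icc.2 (by omega))
                (fun j => ∫ t in (0:ℝ)..(1 / (k:ℝ)),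
                  |f ((j:ℝ) / k + t) - f ((j:ℝ) / k - t)|) := by
  refine ⟨fun x hx => ?_, fun k hk x hx => ?_⟩
  · have huc := isCompact_Icc.uniformContinuousOn_of_continuous hf_cont
    refine Metric.tendsto_nhds.2 fun ε hε => ?_
    filter_upwards [eventually_mem_Icc_half_div hx, eventually_ge_atTop 2,
      eventually_mul_integral_abs_sub_le huc (half_pos hε)] with k hxk hk hosc
    obtain ⟨j, hj, hgap⟩ := exists_abs_histoVal_sub_polyVal_le hf_cont hk hxk
    have hj' := Finset.mem_Icc.1 hj
    rw [Real.dist_eq, sub_zero, abs_abs]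
    exact (hgap.trans (hosc j hj'.1 (by omega))).trans_lt (half_lt_self hε)
  · obtain ⟨j, hj, hgap⟩ := exists_abs_histoVal_sub_polyVal_le hf_cont hk hx
    refine hgap.trans (mul_le_mul_of_nonneg_left ?_ k.cast_nonneg)
    apply Finset.le_sup' _ hj
end
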